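/- arXiv:2601.07168 — 5 statements merged into one kernel-verified Lean document; each statement's English description precedes it below -/
import Mathlib

section
/- Let k be a field of characteristic 2 and let f be the linear functional on 2×2 matrices over k given by f(M) = M₀₀ + M₁₀ + M₁₁. Then f vanishes on every matrix Y satisfying f(⁅Y, M⁆) = 0 for all M; that is, f is zero on the set {Y : ∀ M, f(Y*M - M*Y) = 0}. (This shows the functional a+c+d on 𝔭𝔤𝔩₂ in characteristic 2 is 'nilpotent' in the sense of Collingwood–McGovern, vanishing on the Lie algebra of its own centralizer.) -/
theorem stmt_4 (k : Type*) [Field k] [CharP k 2]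
    (Y : Matrix (Fin 2) (Fin 2) k)
    (hY : ∀ M : Matrix (Fin 2) (Fin 2) k,
      (Y * M - M * Y) 0 0 + (Y * M - M * Y) 1 0 + (Y * M - M * Y) 1 1 = 0) :
    Y 0 0 + Y 1 0 + Y 1 1 = 0 := by
  have h2 : (2 : k) = 0 := by
    have := CharP.cast_eq_zero k 2; simpa using this
  have h1 := hY !![1,0;0,0]
  have hb := hY !![0,0;1,0]
  simp [Matrix.mul_apply, Matrix.vecMul, dotProduct, Fin.sum_univ_succ, Matrix.sub_apply] at h1 hb
  linear_combination h1 + hb + (Y 0 0) * h2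
end

section
/- Let k be a field of characteristic 2, J the 4×4 antidiagonal matrix of ones, and define 𝔰𝔭₄ = {M : Mᵀ * J + J * M = 0}. Let u = 1 + E₀₁ + E₂₃ (so u⁻¹ = u). Then for every M ∈ 𝔰𝔭₄, (u * M * u) 0 0 + (u * M * u) 2 2 = M 0 0 + M 2 2. (I.e. the 'semisimple' covector X*_s : M ↦ M₀₀ + M₂₂ on 𝔰𝔭₄* is fixed by the coadjoint action of u.) -/
/-!
The columns 0 and 2 of `u` are standard basis vectors, so `(u * M * u) i i = (u * M) i i` for
`i = 0, 2`, which adds row 1 resp. row 3 of `M` to row 0 resp. row 2. Hence the two sides differ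
by `M 1 0 + M 3 2`, and this is the `(2, 0)` entry of `Mᵀ * J + J * M`, because `J` is the
permutation matrix of `Fin.rev`.
-/

open Matrix PEquiv

theorem Fin.val_add_val_eq_iff_rev_eq {n : ℕ} (i j : Fin (n + 1)) :
    (i : ℕ) + j = n ↔ i.rev = j := by
  rw [Fin.ext_iff, Fin.val_rev]
  omega

section Antidiagonal

variable {R : Type*} [NonAssocSemiring R] {n : ℕ}

theorem Matrix.eq_toMatrix_revPerm_of_antidiagonal (J : Matrix (Fin (n + 1)) (Fin (n + 1)) R)
    (hJ : ∀ i j, J i j = if (i : ℕ) + (j : ℕ) = n then 1 else 0) :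
    J = Fin.revPerm.toPEquiv.toMatrix := by
  ext i j
  simp [hJ, Fin.val_add_val_eq_iff_rev_eq]

theorem Matrix.transpose_mul_add_mul_toMatrix_revPerm_apply (M : Matrix (Fin n) (Fin n) R)
    (i j : Fin n) :
    (Mᵀ * (Fin.revPerm.toPEquiv.toMatrix : Matrix (Fin n) (Fin n) R) +
      Fin.revPerm.toPEquiv.toMatrix * M : Matrix (Fin n) (Fin n) R) i j =
      M j.rev i + M i.rev j := by
  rw [mul_toMatrix_toPEquiv, toMatrix_toPEquiv_mul]
  simp

end Antidiagonal

section ColumnSingle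

variable {m R : Type*} [Fintype m] [DecidableEq m] [NonAssocSemiring R]

theorem Matrix.mul_mul_apply_self_of_col_eq_single (u M : Matrix m m R) {i : m}
    (hu : ∀ b, u b i = if b = i then 1 else 0) : (u * M * u) i i = (u * M) i i := by
  simp [mul_apply, hu]

end ColumnSingle

theorem stmt_10_general (k : Type*) [Field k]
    (J : Matrix (Fin 4) (Fin 4) k)
    (hJ : ∀ i j, J i j = if (i : ℕ) + (j : ℕ) = 3 then 1 else 0)
    (u : Matrix (Fin 4) (Fin 4) k)
    (hu : u = 1 + Matrix.single 0 1 1 + Matrix.single 2 3 1)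
    (M : Matrix (Fin 4) (Fin 4) k)
    (hM : M.transpose * J + J * M = 0) :
    (u * M * u) 0 0 + (u * M * u) 2 2 = M 0 0 + M 2 2 := by
  have hsp : M 3 2 + M 1 0 = 0 := by
    have h := transpose_mul_add_mul_toMatrix_revPerm_apply M 2 0
    rwa [← eq_toMatrix_revPerm_of_antidiagonal J hJ, hM, eq_comm] at h
  have hcol0 : ∀ b, u b 0 = if b = 0 then 1 else 0 := by
    intro b; fin_cases b <;> simp [hu, one_apply]
  have hcol2 : ∀ b, u b 2 = if b = 2 then 1 else 0 := by
    intro b; fin_cases b <;> simp [hu, one_apply]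
  have hrow0 : (u * M) 0 0 = M 0 0 + M 1 0 := by simp [hu, add_mul, single_mul_apply_same]
  have hrow2 : (u * M) 2 2 = M 2 2 + M 3 2 := by simp [hu, add_mul, single_mul_apply_same]
  rw [mul_mul_apply_self_of_col_eq_single u M hcol0,
    mul_mul_apply_self_of_col_eq_single u M hcol2, hrow0, hrow2]
  linear_combination hsp

theorem stmt_10 (k : Type*) [Field k] [CharP k 2]
    (J : Matrix (Fin 4) (Fin 4) k)
    (hJ : ∀ i j, J i j = if (i : ℕ) + (j : ℕ) = 3 then 1 else 0)
    (u : Matrix (Fin 4) (Fin 4) k)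
    (hu : u = 1 + Matrix.single 0 1 1 + Matrix.single 2 3 1)
    (M : Matrix (Fin 4) (Fin 4) k)
    (hM : M.transpose * J + J * M = 0) :
    (u * M * u) 0 0 + (u * M * u) 2 2 = M 0 0 + M 2 2 :=
  stmt_10_general k J hJ u hu M hM
end

section
/- Let k be a field of characteristic 2, J the 4×4 antidiagonal matrix of ones, 𝔰𝔭₄ = {M : Mᵀ*J + J*M = 0}, and v = 1 + E₀₃ (so v⁻¹ = v). Then there exists M ∈ 𝔰𝔭₄ (for instance M = E₃₀, the matrix unit in position (3,0)) such that (v*M*v) 0 0 + (v*M*v) 2 2 ≠ M 0 0 + M 2 2. Thus the semisimple covector X*_s : M ↦ M₀₀ + M₂₂ is NOT fixed by the coadjoint action of v. -/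
/-! Take `M = E₃₀`. In characteristic 2, for symmetric `J` the condition `Mᵀ J + J M = 0` says
exactly that `J M` is symmetric, and `J E₃₀ = E₀₀`. Conjugating by `v = 1 + E₀₃` gives
`v E₃₀ v = E₃₀ + E₀₀ + E₃₃ + E₀₃`, whose `(0,0)` entry is `1`, while `E₃₀` has zero diagonal. -/

namespace Matrix

variable {n : Type*} [Fintype n]

theorem transpose_mul_add_mul_eq_zero_of_charTwo {R : Type*} [CommRing R] [CharP R 2]
    {J M : Matrix n n R} (hJ : Jᵀ = J) (hJM : (J * M)ᵀ = J * M) :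
    Mᵀ * J + J * M = 0 := by
  rw [← hJ, ← transpose_mul, hJ, hJM]
  ext a b
  exact CharTwo.add_self_eq_zero _

variable [DecidableEq n]

theorem mul_single_of_col_eq_pi_single {R : Type*} [Semiring R] {J : Matrix n n R}
    {i i' : n} (hJ : ∀ a, J a i = if a = i' then 1 else 0) (j : n) :
    J * single i j 1 = single i' j 1 := by
  ext a b
  by_cases hb : b = j
  · subst hb
    by_cases ha : a = i' <;> simp [hJ, ha, Ne.symm]
  · simp [hb, single_apply_of_col_ne _ _ (Ne.symm hb)]

theorem one_add_single_mul_single_mul_one_add_single {R : Type*} [Semiring R] (i j : n) :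
    (1 + single i j (1 : R)) * single j i 1 * (1 + single i j 1) =
      single j i 1 + single i i 1 + single j j 1 + single i j 1 := by
  simp only [add_mul, mul_add, one_mul, mul_one, single_mul_single_same]
  abel

end Matrix

open Matrix

theorem stmt_12 (k : Type*) [Field k] [CharP k 2]
    (J : Matrix (Fin 4) (Fin 4) k)
    (hJ : ∀ i j, J i j = if (i : ℕ) + (j : ℕ) = 3 then 1 else 0)
    (v : Matrix (Fin 4) (Fin 4) k)
    (hv : v = 1 + Matrix.single 0 3 1) :
    ∃ M : Matrix (Fin 4) (Fin 4) k,
      M.transpose * J + J * M = 0 ∧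
      (v * M * v) 0 0 + (v * M * v) 2 2 ≠ M 0 0 + M 2 2 := by
  have hJ_symm : Jᵀ = J := by
    ext i j
    simp only [transpose_apply, hJ, add_comm]
  have hJ_col : ∀ a, J a 3 = if a = 0 then 1 else 0 := by
    intro a
    fin_cases a <;> simp [hJ]
  refine ⟨single 3 0 1, transpose_mul_add_mul_eq_zero_of_charTwo hJ_symm ?_, ?_⟩
  · rw [mul_single_of_col_eq_pi_single hJ_col, transpose_single]
  · subst hv
    rw [one_add_single_mul_single_mul_one_add_single]
    simp
end

section
/- Non-uniqueness of Jordan decompositions in 𝔰𝔭₄* in characteristic 2: let k be a field of characteristic 2, J the 4×4 antidiagonal matrix of ones, 𝔰𝔭₄ = {M : Mᵀ*J + J*M = 0}, u = 1 + E₀₁ + E₂₃, v = 1 + E₀₃, w = u*v. Define covectors on 𝔰𝔭₄ by f_s(M) = M₀₀ + M₂₂ and f_n(M) = M₂₀ and f = f_s + f_n. Then: (a) w ∈ Sp₄(k) (wᵀ*J*w = J); (b) w is an involution; (c) f(w*M*w) = f(M) for all M ∈ 𝔰𝔭₄; but (d) there exists M ∈ 𝔰𝔭₄ with f_s(w*M*w)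 ≠ f_s(M). Hence w fixes the covector X* = f but moves its semisimple part X*_s = f_s, giving two distinct semisimple parts of Jordan decompositions of X*. -/
/-!
Over any ring `w = u * v = 1 + N` with `N = E₀₁ + E₀₃ + E₂₃`, `N * N = 0` and `Nᵀ * J * N = 0`,
while `Nᵀ * J + J * N = 2 (E₁₃ + E₃₁ + E₃₃)`; so (a) and (b) hold as soon as `2 = 0`.
Conjugating by `w` changes `f_s` by `M₁₀ + M₃₀ + M₃₂` and `f_n` by `M₃₀`, so `f` changes by
`M₁₀ + M₃₂ + 2 M₃₀`. The `(0, 2)` entry of the defining equation of `𝔰𝔭₄` is `M₁₀ + M₃₂ = 0`,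
so `f` is fixed, while `f_s` moves by `M₃₀`, which is `1` for `M = E₃₀ ∈ 𝔰𝔭₄`.
-/

namespace Sp4CharTwo

open Matrix

variable {R : Type*}

def antidiag [Zero R] [One R] : Matrix (Fin 4) (Fin 4) R :=
  !![0, 0, 0, 1; 0, 0, 1, 0; 0, 1, 0, 0; 1, 0, 0, 0]

def involution [Zero R] [One R] : Matrix (Fin 4) (Fin 4) R :=
  !![1, 1, 0, 1; 0, 1, 0, 0; 0, 0, 1, 1; 0, 0, 0, 1]

theorem eq_antidiag [Zero R] [One R] (J : Matrix (Fin 4) (Fin 4) R)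
    (hJ : ∀ i j, J i j = if (i : ℕ) + (j : ℕ) = 3 then 1 else 0) : J = antidiag := by
  ext i j
  fin_cases i <;> fin_cases j <;> simp [hJ, antidiag]

section Semiring

variable [Semiring R]

theorem one_add_single_add_single_mul_one_add_single :
    (1 + single 0 1 1 + single 2 3 1) * (1 + single 0 3 1) =
      (involution : Matrix (Fin 4) (Fin 4) R) := by
  ext i j
  fin_cases i <;> fin_cases j <;> simp [involution, mul_apply, one_apply, Fin.sum_univ_four]

variable (M : Matrix (Fin 4) (Fin 4) R)

theorem involution_mul_mul_involution_apply_zero_zero :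
    (involution * M * involution : Matrix (Fin 4) (Fin 4) R) 0 0 = M 0 0 + M 1 0 + M 3 0 := by
  simp [involution, mul_apply, vecMul, dotProduct, Fin.sum_univ_four]

theorem involution_mul_mul_involution_apply_two_two :
    (involution * M * involution : Matrix (Fin 4) (Fin 4) R) 2 2 = M 2 2 + M 3 2 := by
  simp [involution, mul_apply, vecMul, dotProduct, Fin.sum_univ_four]

theorem involution_mul_mul_involution_apply_two_zero :
    (involution * M * involution : Matrix (Fin 4) (Fin 4) R) 2 0 = M 2 0 + M 3 0 := by
  simp [involution, mul_apply, vecMul, dotProduct, Fin.sum_univ_four]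

theorem transpose_mul_antidiag_add_antidiag_mul_apply_zero_two :
    (Mᵀ * antidiag + antidiag * M : Matrix (Fin 4) (Fin 4) R) 0 2 = M 1 0 + M 3 2 := by
  simp [antidiag, mul_apply, vecMul, dotProduct, Fin.sum_univ_four]

end Semiring

section CharTwo

variable [Ring R] [CharP R 2]

theorem involution_transpose_mul_antidiag_mul :
    (involution : Matrix (Fin 4) (Fin 4) R)ᵀ * antidiag * involution = antidiag := by
  ext i j
  fin_cases i <;> fin_cases j <;>
    simp [involution, antidiag, mul_apply, Fin.sum_univ_four, CharTwo.add_self_eq_zero]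

theorem involution_mul_self : (involution : Matrix (Fin 4) (Fin 4) R) * involution = 1 := by
  ext i j
  fin_cases i <;> fin_cases j <;>
    simp [involution, mul_apply, Fin.sum_univ_four, CharTwo.add_self_eq_zero]

theorem transpose_mul_antidiag_add_antidiag_mul_single_three_zero :
    (single 3 0 1 : Matrix (Fin 4) (Fin 4) R)ᵀ * antidiag + antidiag * single 3 0 1 = 0 := by
  ext i j
  fin_cases i <;> fin_cases j <;>
    simp [antidiag, mul_apply, vecMul, dotProduct, single_apply, CharTwo.add_self_eq_zero]

end CharTwo

end Sp4CharTwo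

open Sp4CharTwo in
theorem stmt_13 (k : Type*) [Field k] [CharP k 2]
    (J : Matrix (Fin 4) (Fin 4) k)
    (hJ : ∀ i j, J i j = if (i : ℕ) + (j : ℕ) = 3 then 1 else 0)
    (u v w : Matrix (Fin 4) (Fin 4) k)
    (hu : u = 1 + Matrix.single 0 1 1 + Matrix.single 2 3 1)
    (hv : v = 1 + Matrix.single 0 3 1)
    (hw : w = u * v) :
    w.transpose * J * w = J ∧
    w * w = 1 ∧
    (∀ M : Matrix (Fin 4) (Fin 4) k, M.transpose * J + J * M = 0 →
      ((w * M * w) 0 0 + (w * M * w) 2 2) + (w * M * w) 2 0 =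
        (M 0 0 + M 2 2) + M 2 0) ∧
    (∃ M : Matrix (Fin 4) (Fin 4) k, M.transpose * J + J * M = 0 ∧
      (w * M * w) 0 0 + (w * M * w) 2 2 ≠ M 0 0 + M 2 2) := by
  obtain rfl := eq_antidiag J hJ
  obtain rfl : w = involution := by
    rw [hw, hu, hv, one_add_single_add_single_mul_one_add_single]
  refine ⟨involution_transpose_mul_antidiag_mul, involution_mul_self, fun M hM => ?_,
    Matrix.single 3 0 1, transpose_mul_antidiag_add_antidiag_mul_single_three_zero, ?_⟩
  · have h02 : M 1 0 + M 3 2 = 0 := by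
      rw [← transpose_mul_antidiag_add_antidiag_mul_apply_zero_two, hM, Matrix.zero_apply]
    rw [involution_mul_mul_involution_apply_zero_zero, involution_mul_mul_involution_apply_two_two,
      involution_mul_mul_involution_apply_two_zero]
    linear_combination h02 + M 3 0 * CharTwo.two_eq_zero (R := k)
  · rw [involution_mul_mul_involution_apply_zero_zero, involution_mul_mul_involution_apply_two_two]
    simp
end

section
/- Let k be a field of characteristic 2, V a k-module, and b an alternating bilinear form on V. Let 𝔰𝔭(V,b) = {X : ∀ u w, b(Xu, w) + b(u, Xw) = 0} and 𝔰𝔬(V,b) = {X ∈ 𝔰𝔭(V,b) : ∀ v, b(Xv, v) = 0}. Then 𝔰𝔬(V,b) is a Lie ideal in 𝔰𝔭(V,b): for every X ∈ 𝔰𝔭(V,b) and Y ∈ 𝔰𝔬(V,b), the commutator ⁅X,Y⁆ = X∘Y - Y∘X satisfies b(⁅X,Y⁆v, v) = 0 for all v (and ⁅X,Y⁆ ∈ 𝔰𝔭(V,b)). -/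
theorem stmt_15 (k : Type*) [Field k] [CharP k 2]
    (V : Type*) [AddCommGroup V] [Module k V]
    (b : V →ₗ[k] V →ₗ[k] k) (halt : ∀ v, b v v = 0)
    (X Y : V →ₗ[k] V)
    (hX : ∀ u w, b (X u) w + b u (X w) = 0)
    (hY : ∀ u w, b (Y u) w + b u (Y w) = 0)
    (hY' : ∀ v, b (Y v) v = 0) :
    (∀ v, b ((X ∘ₗ Y - Y ∘ₗ X) v) v = 0) ∧
    (∀ u w, b ((X ∘ₗ Y - Y ∘ₗ X) u) w + b u ((X ∘ₗ Y - Y ∘ₗ X) w) = 0) := by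
  have h2 : (2 : k) = 0 := by
    have := CharP.cast_eq_zero k 2
    simpa using this
  have hsym : ∀ u w, b u w + b w u = 0 := by
    intro u w
    have h := halt (u + w)
    simp only [map_add, LinearMap.add_apply, halt] at h
    linear_combination h
  constructor
  · intro v
    simp only [LinearMap.sub_apply, LinearMap.comp_apply, map_sub, LinearMap.sub_apply]
    have h1 := hX (Y v) v
    have h2' := hY (X v) v
    have h3 := hsym (Y v) (X v)
    linear_combination h1 - h2' - h3 + h2 * (b (X v) (Y v))
  · intro u w
    simp only [LinearMap.sub_apply, LinearMap.comp_apply, map_sub, LinearMap.sub_apply]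
    have h1 := hX (Y u) w
    have h2' := hY u (X w)
    have h3 := hY (X u) w
    have h4 := hX u (Y w)
    have h5 := hX (Y u) w
    have h6 := hY u (X w)
    -- b(XYu,w) = -b(Yu,Xw) = b(u,YXw); b(YXu,w) = -b(Xu,Yw) = b(u,XYw)
    have a1 := hX (Y u) w
    have a2 := hY u (X w)
    have a3 := hY (X u) w
    have a4 := hX u (Y w)
    linear_combination a1 - a2 + a3 - a4 - h2 * (b (Y (X u)) w) - h2 * (b (Y u) (X w)) + h2 * (b u (X (Y w))) + h2 * (b (Y u) (X w))
end
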